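/- Let (α,β) ∈ U and let (m̄_k)_{k≥1} be a nondecreasing sequence of integers with m̄_1 ≥ 1 (and m̄_0 := 0). If there exists x̃ ∈ [0,1] with x̃ ≠ β such that x̃ follows the pattern R L^{m_1} R L^{m_2} R L^{m_3} ⋯ under T_{α,β}, then |Θ(α,β)| ≥ |x̃ − β|; in particular Θ(α,β) ≠ 0. -/

import Mathlib

/-!
Inverting the two branches of `T` along the orbit `yₙ = Tⁿ x̃` gives `yₙ = 1 + r yₙ₊₁` at
the `R`-times `n = k + m̄ₖ` and `yₙ = s yₙ₊₁` at all other times, where `r = (α-1)/β` and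
`s = α/β`. Telescoping over the first `N` blocks `R L^{mₖ}` yields
`x̃ = ∑_{k<N} rᵏ s^{m̄ₖ} + r^N s^{m̄_N} y_{N+m̄_N}`, and the orbit stays in `[0,1]` while
`|r| < 1`, so `x̃ = ∑ₖ rᵏ s^{m̄ₖ} = Θ(α,β) + β`. Hence `Θ(α,β) = x̃ - β` exactly.
-/

/-- The skew tent map `T_{α,β}`. -/
noncomputable def T (α β x : ℝ) : ℝ :=
  if x ≤ α then β / α * x else β / (1 - α) * (1 - x)

/-- The auxiliary function `Θ` associated to the sequence `m̄` (with `m̄ 0 = 0`):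
`Θ(α,β) = 1 - β + ∑_{k=1}^∞ ((α-1)/β)^k (α/β)^{m̄_k}`. -/
noncomputable def theta (m : ℕ → ℕ) (α β : ℝ) : ℝ :=
  1 - β + ∑' k : ℕ, ((α - 1) / β) ^ (k + 1) * (α / β) ^ (m (k + 1))

open Finset Filter Topology

section Telescoping

variable {m : ℕ → ℕ} {r s : ℝ} {y : ℕ → ℝ}

lemma eq_pow_mul_of_forall_Ico {a b : ℕ} (hab : a ≤ b)
    (hL : ∀ n ∈ Ico a b, y n = s * y (n + 1)) : y a = s ^ (b - a) * y b := by
  induction b, hab using Nat.le_induction with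
  | base => simp
  | succ b hab ih =>
    rw [ih fun n hn => hL n (Ico_subset_Ico_right b.le_succ hn), hL b (by simp [hab]),
      Nat.succ_sub hab, pow_succ]
    ring

lemma not_exists_eq_add_of_mem_Ico (hmono : Monotone m) {N n : ℕ}
    (hn : n ∈ Ico (N + m N + 1) (N + 1 + m (N + 1))) : ¬ ∃ k, n = k + m k := by
  rintro ⟨k, rfl⟩
  rw [mem_Ico] at hn
  have hf : StrictMono fun k => k + m k := strictMono_id.add_monotone hmono
  have hNk : N < k := hf.lt_iff_lt.mp (by omega)
  have hkN : k < N + 1 := hf.lt_iff_lt.mp hn.2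
  omega

lemma sub_sum_range_eq_of_pattern (hm0 : m 0 = 0) (hmono : Monotone m)
    (hR : ∀ k, y (k + m k) = 1 + r * y (k + m k + 1))
    (hL : ∀ n, (¬ ∃ k, n = k + m k) → y n = s * y (n + 1)) (N : ℕ) :
    y 0 - ∑ i ∈ range N, r ^ i * s ^ m i = r ^ N * s ^ m N * y (N + m N) := by
  induction N with
  | zero => simp [hm0]
  | succ N ih =>
    have hmN : m N ≤ m (N + 1) := hmono N.le_succ
    have hblock := eq_pow_mul_of_forall_Ico (by omega : N + m N + 1 ≤ N + 1 + m (N + 1))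
      fun n hn => hL n (not_exists_eq_add_of_mem_Ico hmono hn)
    have hpow : s ^ m (N + 1) = s ^ m N * s ^ (N + 1 + m (N + 1) - (N + m N + 1)) := by
      rw [← pow_add]
      congr 1
      omega
    rw [sum_range_succ, sub_add_eq_sub_sub, ih, hR, hblock, hpow, pow_succ]
    ring

lemma hasSum_of_pattern (hm0 : m 0 = 0) (hmono : Monotone m) (hr : |r| < 1)
    (hs0 : 0 ≤ s) (hs1 : s ≤ 1) (hy : ∀ n, |y n| ≤ 1)
    (hR : ∀ k, y (k + m k) = 1 + r * y (k + m k + 1))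
    (hL : ∀ n, (¬ ∃ k, n = k + m k) → y n = s * y (n + 1)) :
    HasSum (fun k => r ^ k * s ^ m k) (y 0) := by
  have hbound : ∀ k, ‖r ^ k * s ^ m k‖ ≤ |r| ^ k := fun k => by
    rw [Real.norm_eq_abs, abs_mul, abs_pow, abs_of_nonneg (pow_nonneg hs0 _)]
    exact mul_le_of_le_one_right (by positivity) (pow_le_one₀ hs0 hs1)
  have hsum : Summable fun k => r ^ k * s ^ m k :=
    .of_norm_bounded (summable_geometric_of_abs_lt_one (by rwa [abs_abs])) hbound
  have hrem : Tendsto (fun N => r ^ N * s ^ m N * y (N + m N)) atTop (𝓝 0) := by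
    refine squeeze_zero_norm (fun N => ?_) (tendsto_pow_atTop_nhds_zero_of_lt_one (abs_nonneg r) hr)
    rw [norm_mul]
    exact (mul_le_mul (hbound N) (hy _) (abs_nonneg _) (by positivity)).trans_eq (mul_one _)
  rw [hsum.hasSum_iff_tendsto_nat]
  simpa only [← sub_sum_range_eq_of_pattern hm0 hmono hR hL, sub_sub_cancel, sub_zero]
    using hrem.const_sub (y 0)

end Telescoping

section TentMap

variable {α β y : ℝ}

lemma T_mapsTo_Icc (hα0 : 0 < α) (hα1 : α < 1) (hβ0 : 0 ≤ β) (hβ1 : β ≤ 1) :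
    Set.MapsTo (T α β) (Set.Icc 0 1) (Set.Icc 0 1) := by
  rintro y ⟨hy0, hy1⟩
  unfold T
  split_ifs with hy
  · constructor
    · positivity
    · calc β / α * y ≤ β / α * α := by gcongr
        _ ≤ 1 := by rwa [div_mul_cancel₀ _ hα0.ne']
  · have h1α : 0 < 1 - α := by linarith
    constructor
    · exact mul_nonneg (by positivity) (by linarith)
    · calc β / (1 - α) * (1 - y) ≤ β / (1 - α) * (1 - α) := by gcongr; linarith
        _ ≤ 1 := by rwa [div_mul_cancel₀ _ h1α.ne']

lemma eq_one_add_mul_T_of_lt (hα1 : α < 1) (hβ : β ≠ 0) (hy : α < y) :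
    y = 1 + (α - 1) / β * T α β y := by
  have : 1 - α ≠ 0 := by linarith
  rw [T, if_neg hy.not_ge]
  field_simp
  ring

lemma eq_mul_T_of_le (hα : α ≠ 0) (hβ : β ≠ 0) (hy : y ≤ α) : y = α / β * T α β y := by
  rw [T, if_pos hy]
  field_simp

lemma theta_eq_of_hasSum {m : ℕ → ℕ} (hm0 : m 0 = 0) {x : ℝ}
    (h : HasSum (fun k => ((α - 1) / β) ^ k * (α / β) ^ m k) x) : theta m α β = x - β := by
  rw [theta, ((hasSum_nat_add_iff' 1).mpr h).tsum_eq]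
  simp [hm0]

end TentMap

theorem stmt1_general (α β : ℝ) (hβ2 : β ≤ 1)
    (hα1 : 1 - β < α) (hα2 : α < β)
    (m : ℕ → ℕ) (hm0 : m 0 = 0) (hmono : Monotone m)
    (x : ℝ) (hx0 : 0 ≤ x) (hx1 : x ≤ 1) (hxβ : x ≠ β)
    (hpat : ∀ n : ℕ,
      ((∃ k : ℕ, n = k + m k) → α < (T α β)^[n] x) ∧
      ((¬ ∃ k : ℕ, n = k + m k) → (T α β)^[n] x < α)) :
    |x - β| ≤ |theta m α β| ∧ theta m α β ≠ 0 := by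
  have hα0 : 0 < α := by linarith
  have hβ0 : 0 < β := by linarith
  have hα1' : α < 1 := by linarith
  have horbit : ∀ n, |(T α β)^[n] x| ≤ 1 := fun n => by
    obtain ⟨h0, h1⟩ := (T_mapsTo_Icc hα0 hα1' hβ0.le hβ2).iterate n ⟨hx0, hx1⟩
    exact abs_le.mpr ⟨by linarith, h1⟩
  have hr : |(α - 1) / β| < 1 := by
    rw [abs_div, abs_of_neg (by linarith), abs_of_pos hβ0, div_lt_one hβ0]
    linarith
  have hsum := hasSum_of_pattern hm0 hmono hr (div_nonneg hα0.le hβ0.le)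
    ((div_le_one hβ0).mpr hα2.le) horbit
    (fun k => by
      rw [Function.iterate_succ_apply']
      exact eq_one_add_mul_T_of_lt hα1' hβ0.ne' ((hpat _).1 ⟨k, rfl⟩))
    (fun n hn => by
      rw [Function.iterate_succ_apply']
      exact eq_mul_T_of_le hα0.ne' hβ0.ne' ((hpat n).2 hn).le)
  rw [theta_eq_of_hasSum hm0 hsum]
  exact ⟨le_rfl, sub_ne_zero.mpr hxβ⟩

/-- If `(α,β) ∈ U` and some `x̃ ∈ [0,1]`, `x̃ ≠ β`, follows the pattern
`R L^{m_1} R L^{m_2} ⋯` under `T_{α,β}`, then `|Θ(α,β)| ≥ |x̃ - β|`; in particular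
`Θ(α,β) ≠ 0`. -/
theorem stmt1 (α β : ℝ) (hβ1 : 1 / 2 < β) (hβ2 : β ≤ 1)
    (hα1 : 1 - β < α) (hα2 : α < β)
    (m : ℕ → ℕ) (hm0 : m 0 = 0) (hm1 : 1 ≤ m 1) (hmono : Monotone m)
    (x : ℝ) (hx0 : 0 ≤ x) (hx1 : x ≤ 1) (hxβ : x ≠ β)
    (hpat : ∀ n : ℕ,
      ((∃ k : ℕ, n = k + m k) → α < (T α β)^[n] x) ∧
      ((¬ ∃ k : ℕ, n = k + m k) → (T α β)^[n] x < α)) :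
    |x - β| ≤ |theta m α β| ∧ theta m α β ≠ 0 :=
  stmt1_general α β hβ2 hα1 hα2 m hm0 hmono x hx0 hx1 hxβ hpat
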